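/- For every n ≥ 7, the order of the letter b in the automaton 𝒜_n is 6; that is, δ(q,b⁶) = q for every state q ∈ Q_n, and 6 is the least positive integer k such that δ(q,b^k) = q for all q ∈ Q_n. -/

import Mathlib

/-- The two letters of a binary alphabet. -/
inductive Letter where
  | a : Letter
  | b : Letter
deriving DecidableEq

/-- The transition function of the automaton `𝒜ₙ` on the state set
`Qₙ = {0, 1, …, n-1}` (represented inside `ℕ`):
`δ(0,a)=δ(0,b)=0`; `δ(1,a)=0`, `δ(2,a)=4`, `δ(3,a)=2`, `δ(4,a)=3`;
`δ(1,b)=3`, `δ(2,b)=1`, `δ(3,b)=2`; and for `4 ≤ j ≤ n-1`: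
`δ(j,a) = j-1` if `j ≥ 6` is even, `δ(j,a) = j+1` if `j ≥ 5` is odd and
`j ≠ n-1`, `δ(j,a) = j` if `j = n-1` is odd; `δ(j,b) = j-1` if `j ≥ 5` is odd,
`δ(j,b) = j+1` if `j ≥ 4` is even and `j ≠ n-1`, `δ(j,b) = j` if `j = n-1`
is even. -/
def anDelta (n : ℕ) (q : ℕ) (ℓ : Letter) : ℕ :=
  match q, ℓ with
  | 0, _ => 0
  | 1, Letter.a => 0
  | 1, Letter.b => 3
  | 2, Letter.a => 4
  | 2, Letter.b => 1
  | 3, _ => 2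
  | 4, Letter.a => 3
  | j, Letter.a => if j % 2 = 1 then (if j = n - 1 then j else j + 1) else j - 1
  | j, Letter.b => if j % 2 = 0 then (if j = n - 1 then j else j + 1) else j - 1

/-- Extension of the transition function of `𝒜ₙ` to words:
`δ(q, uv) = δ(δ(q, u), v)`. -/
def anStar (n : ℕ) (q : ℕ) (w : List Letter) : ℕ :=
  w.foldl (anDelta n) q

/-!
The letter `b` acts on `Qₙ` as a permutation: it fixes `0`, cycles `1 ↦ 3 ↦ 2 ↦ 1`, and swaps
`2i` with `2i + 1` for `i ≥ 2` (fixing `n - 1` when it is even). Hence `b⁶` is the identity, while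
the orbits of `1` and of `4` have lengths `3` and `2`, so any `k` with `bᵏ = id` is a multiple of `6`.
-/

open Function

lemma anStar_replicate (n q k : ℕ) (ℓ : Letter) :
    anStar n q (List.replicate k ℓ) = (anDelta n · ℓ)^[k] q := by
  induction k generalizing q with
  | zero => rfl
  | succ k ih => exact ih (anDelta n q ℓ)

lemma anDelta_b_of_four_le {n q : ℕ} (hq : 4 ≤ q) :
    anDelta n q Letter.b = if q % 2 = 0 then (if q = n - 1 then q else q + 1) else q - 1 := by
  obtain ⟨k, rfl⟩ := Nat.exists_eq_add_of_le' hq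
  cases k <;> rfl

lemma isPeriodicPt_b_two {n q : ℕ} (h4 : 4 ≤ q) (hq : q < n) :
    IsPeriodicPt (anDelta n · Letter.b) 2 q := by
  have h4' : 4 ≤ anDelta n q Letter.b := by
    rw [anDelta_b_of_four_le h4]; split_ifs <;> omega
  change anDelta n (anDelta n q Letter.b) Letter.b = q
  rw [anDelta_b_of_four_le h4', anDelta_b_of_four_le h4]
  split_ifs <;> omega

lemma isPeriodicPt_b_six {n q : ℕ} (hq : q < n) :
    IsPeriodicPt (anDelta n · Letter.b) 6 q := by
  by_cases h4 : 4 ≤ q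
  · exact (isPeriodicPt_b_two h4 hq).mul_const 3
  · interval_cases q <;> rfl

lemma minimalPeriod_b_one (n : ℕ) : minimalPeriod (anDelta n · Letter.b) 1 = 3 :=
  minimalPeriod_eq_prime rfl (by simp [IsFixedPt, anDelta])

lemma minimalPeriod_b_four {n : ℕ} (hn : 6 ≤ n) : minimalPeriod (anDelta n · Letter.b) 4 = 2 := by
  refine minimalPeriod_eq_prime (isPeriodicPt_b_two le_rfl (by omega)) ?_
  rw [IsFixedPt, anDelta_b_of_four_le le_rfl]
  split_ifs <;> omega

/-- For every `n ≥ 7`, the order of the letter `b` in the automaton `𝒜ₙ`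
is `6`: `δ(q, b⁶) = q` for every state `q ∈ Qₙ`, and `6` is the least
positive integer `k` such that `δ(q, bᵏ) = q` for all `q ∈ Qₙ`. -/
theorem an_order_of_b (n : ℕ) (hn : 7 ≤ n) :
    (∀ q : ℕ, q < n → anStar n q (List.replicate 6 Letter.b) = q) ∧
    (∀ k : ℕ, 0 < k →
      (∀ q : ℕ, q < n → anStar n q (List.replicate k Letter.b) = q) →
      6 ≤ k) := by
  simp only [anStar_replicate]
  refine ⟨fun q hq => isPeriodicPt_b_six hq, fun k hk hper => Nat.le_of_dvd hk ?_⟩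
  have h3 : 3 ∣ k := minimalPeriod_b_one n ▸ IsPeriodicPt.minimalPeriod_dvd (hper 1 (by omega))
  have h2 : 2 ∣ k :=
    minimalPeriod_b_four (n := n) (by omega) ▸ IsPeriodicPt.minimalPeriod_dvd (hper 4 (by omega))
  exact Nat.Coprime.mul_dvd_of_dvd_of_dvd (by norm_num) h2 h3
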